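/- For r ≥ 2 and s ≥ 3, if r and s are not both even then adim_2(P_r □ C_s) = 1: when s is odd the vertex (u_1,v_0) is a 2-ARS, and when s is even (so r odd) the vertex (u_{(r+1)/2}, v_0) is a 2-ARS. -/

import Mathlib

/-!
The distance from `(a, b)` to `z = (c, 0)` in `P_r □ C_s` is `|a - c| + min b (s - b)`, so the
class of `x` with respect to `{z}` is the level set of this function through `x`, minus `z`.
The reflection `b ↦ s - b` preserves levels and moves every vertex with `2b ∉ {0, s}`.
For `s = 2m + 1` and `c = 0` every level `d ≥ 1` contains such a vertex, so every class has at
least two elements, and the top level is exactly `{(r - 1, m), (r - 1, m + 1)}`. For `s = 2m`,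
`r` odd and `c = (r - 1) / 2` the same holds for every level below the top one, and the top
level is exactly `{(0, m), (r - 1, m)}`.
-/

open SimpleGraph

/-- Two vertices have the same distances to every vertex of `S`. -/
def sameDists {V : Type*} (G : SimpleGraph V) (S : Set V) (x y : V) : Prop :=
  ∀ z ∈ S, G.dist x z = G.dist y z

/-- The equivalence class (outside `S`) of `x` under the equal-distance relation `R_S`. -/
def cls {V : Type*} (G : SimpleGraph V) (S : Set V) (x : V) : Set V :=
  {y | y ∉ S ∧ sameDists G S x y}

/-- `S` is a `k`-antiresolving set: `S` is nonempty, does not cover `V`, and the minimum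
size of an equivalence class of `R_S` on `V ∖ S` equals `k`. -/
def IsKARS {V : Type*} (G : SimpleGraph V) (k : ℕ) (S : Set V) : Prop :=
  S.Nonempty ∧ Sᶜ.Nonempty ∧
    (∀ x ∉ S, k ≤ (cls G S x).ncard) ∧ ∃ x ∉ S, (cls G S x).ncard = k

/-- The `k`-metric antidimension: the smallest cardinality of a `k`-antiresolving set,
`⊤` (i.e. `+∞`) if none exists. -/
noncomputable def adim {V : Type*} (G : SimpleGraph V) (k : ℕ) : ℕ∞ :=
  sInf ((fun S => (S.ncard : ℕ∞)) '' {S : Set V | IsKARS G k S})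

namespace SimpleGraph

section Potential

variable {V : Type*} {G : SimpleGraph V} {f : V → ℕ}

theorem le_add_length_of_adj_le_succ (hf : ∀ ⦃a b⦄, G.Adj a b → f a ≤ f b + 1) {x y : V} :
    ∀ w : G.Walk x y, f x ≤ f y + w.length
  | .nil => by simp
  | .cons h w => by
    have := hf h
    have := le_add_length_of_adj_le_succ hf w
    rw [Walk.length_cons]
    omega

theorem exists_walk_length_le_of_descent {v : V}
    (hdesc : ∀ a, a ≠ v → ∃ b, G.Adj a b ∧ f b < f a) (u : V) :
    ∃ w : G.Walk u v, w.length ≤ f u := by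
  induction hu : f u using Nat.strong_induction_on generalizing u with
  | _ n ih =>
    by_cases huv : u = v
    · subst huv
      exact ⟨.nil, by simp⟩
    obtain ⟨b, hub, hb⟩ := hdesc u huv
    obtain ⟨w, hw⟩ := ih (f b) (hu ▸ hb) b rfl
    exact ⟨.cons hub w, by rw [Walk.length_cons]; omega⟩

theorem dist_eq_of_descent {v : V} (hv : f v = 0) (hlip : ∀ ⦃a b⦄, G.Adj a b → f a ≤ f b + 1)
    (hdesc : ∀ a, a ≠ v → ∃ b, G.Adj a b ∧ f b < f a) (u : V) : G.dist u v = f u := by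
  obtain ⟨w, hw⟩ := exists_walk_length_le_of_descent hdesc u
  obtain ⟨w', hw'⟩ := w.reachable.exists_walk_length_eq_dist
  have hle := le_add_length_of_adj_le_succ hlip w'
  have hge := dist_le w
  omega

end Potential

theorem dist_boxProd {α β : Type*} {G : SimpleGraph α} {H : SimpleGraph β}
    (hG : G.Preconnected) (hH : H.Preconnected) (x y : α × β) :
    (G □ H).dist x y = G.dist x.1 y.1 + H.dist x.2 y.2 := by
  rw [dist, edist_boxProd, ← (hG _ _).coe_dist_eq_edist, ← (hH _ _).coe_dist_eq_edist,
    ← Nat.cast_add, ENat.toNat_natCast]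

theorem pathGraph_dist {n : ℕ} (u v : Fin n) : (pathGraph n).dist u v = Nat.dist u v := by
  refine dist_eq_of_descent (f := fun a : Fin n => Nat.dist a v) (Nat.dist_self _)
    (fun a b hab => ?_) (fun a ha => ?_) u
  · rcases pathGraph_adj.1 hab with h | h <;> (simp only [Nat.dist]; omega)
  · rcases lt_or_gt_of_ne (Fin.val_ne_of_ne ha) with h | h
    · refine ⟨⟨a + 1, by omega⟩, pathGraph_adj.2 (.inl rfl), ?_⟩
      simp only [Nat.dist]; omega
    · refine ⟨⟨a - 1, by omega⟩, pathGraph_adj.2 (.inr (Nat.sub_add_cancel (by omega))), ?_⟩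
      simp only [Nat.dist]; omega

theorem cycleGraph_adj_iff_dist {n : ℕ} {u v : Fin n} :
    (cycleGraph n).Adj u v ↔ u ≠ v ∧ (Nat.dist u v = 1 ∨ Nat.dist u v + 1 = n) := by
  have hsub : ∀ a b : Fin n,
      (a - b).val = if b.val ≤ a.val then a.val - b.val else n + a.val - b.val := by
    intro a b
    split_ifs with h
    · exact Fin.coe_sub_iff_le.2 h
    · exact Fin.coe_sub_iff_lt.2 (not_le.1 h)
  rw [cycleGraph_adj', hsub, hsub, Ne, Fin.ext_iff]
  have := u.isLt
  have := v.isLt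
  simp only [Nat.dist]
  split_ifs <;> omega

theorem cycleGraph_dist {n : ℕ} (u v : Fin n) :
    (cycleGraph n).dist u v = min (Nat.dist u v) (n - Nat.dist u v) := by
  set f : Fin n → ℕ := fun a => min (Nat.dist a v) (n - Nat.dist a v)
  refine dist_eq_of_descent (f := f) (by simp [f]) (fun a b hab => ?_) (fun a ha => ?_) u
  · rw [cycleGraph_adj_iff_dist] at hab
    have := a.isLt; have := b.isLt; have := v.isLt
    simp only [f, Nat.dist, Ne, Fin.ext_iff] at *
    omega
  · have := a.isLt; have := v.isLt
    have ha' : a.val ≠ v.val := Fin.val_ne_of_ne ha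
    let fwd : Fin n := ⟨if a.val + 1 = n then 0 else a.val + 1, by split_ifs <;> omega⟩
    let bwd : Fin n := ⟨if a.val = 0 then n - 1 else a.val - 1, by split_ifs <;> omega⟩
    have hfwd : (cycleGraph n).Adj a fwd := by
      rw [cycleGraph_adj_iff_dist]
      simp only [fwd, Ne, Fin.ext_iff, Nat.dist]
      split_ifs <;> omega
    have hbwd : (cycleGraph n).Adj a bwd := by
      rw [cycleGraph_adj_iff_dist]
      simp only [bwd, Ne, Fin.ext_iff, Nat.dist]
      split_ifs <;> omega
    have : f fwd < f a ∨ f bwd < f a := by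
      simp only [f, fwd, bwd, Nat.dist]
      split_ifs <;> omega
    exact this.elim (⟨fwd, hfwd, ·⟩) (⟨bwd, hbwd, ·⟩)

theorem dist_pathGraph_boxProd_cycleGraph {r s : ℕ} (x y : Fin r × Fin s) :
    (pathGraph r □ cycleGraph s).dist x y =
      Nat.dist x.1 y.1 + min (Nat.dist x.2 y.2) (s - Nat.dist x.2 y.2) := by
  rw [dist_boxProd (pathGraph_preconnected r) cycleGraph_preconnected, pathGraph_dist,
    cycleGraph_dist]

end SimpleGraph

section AntiResolving

variable {V : Type*} {G : SimpleGraph V}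

theorem mem_cls_singleton {z x y : V} : y ∈ cls G {z} x ↔ y ≠ z ∧ G.dist x z = G.dist y z := by
  simp [cls, sameDists]

theorem isKARS_two_singleton [Finite V] {z : V}
    (hpair : ∀ x ≠ z, ∃ y₁ y₂, y₁ ∈ cls G {z} x ∧ y₂ ∈ cls G {z} x ∧ y₁ ≠ y₂)
    (hexact : ∃ x ≠ z, ∃ y, x ≠ y ∧ cls G {z} x = {x, y}) : IsKARS G 2 {z} := by
  obtain ⟨x, hx, y, hxy, hcls⟩ := hexact
  exact ⟨⟨z, rfl⟩, ⟨x, hx⟩, fun x hx => (Set.one_lt_ncard_iff ..).2 (hpair x hx),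
    ⟨x, hx, Set.ncard_eq_two.2 ⟨x, y, hxy, hcls⟩⟩⟩

theorem adim_eq_one_of_isKARS_singleton [Finite V] {k : ℕ} {z : V} (h : IsKARS G k {z}) :
    adim G k = 1 := by
  refine le_antisymm (sInf_le ⟨{z}, h, by simp⟩) (le_sInf ?_)
  rintro _ ⟨S, hS, rfl⟩
  exact Nat.one_le_cast.2 ((Set.ncard_pos ..).2 hS.1)

end AntiResolving

theorem mem_cls_singleton_pathGraph_boxProd_cycleGraph {r s : ℕ} {z x y : Fin r × Fin s} :
    y ∈ cls (pathGraph r □ cycleGraph s) {z} x ↔ (y.1.val ≠ z.1.val ∨ y.2.val ≠ z.2.val) ∧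
      Nat.dist x.1 z.1 + min (Nat.dist x.2 z.2) (s - Nat.dist x.2 z.2) =
        Nat.dist y.1 z.1 + min (Nat.dist y.2 z.2) (s - Nat.dist y.2 z.2) := by
  rw [mem_cls_singleton, dist_pathGraph_boxProd_cycleGraph, dist_pathGraph_boxProd_cycleGraph,
    Ne, Prod.ext_iff, Fin.ext_iff, Fin.ext_iff, not_and_or]

theorem isKARS_pathGraph_boxProd_cycleGraph_of_odd {r s : ℕ} (hr : 2 ≤ r) (hs : 3 ≤ s)
    (hs_odd : Odd s) {z : Fin r × Fin s} (hz₁ : z.1.val = 0) (hz₂ : z.2.val = 0) :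
    IsKARS (pathGraph r □ cycleGraph s) 2 {z} := by
  obtain ⟨m, rfl⟩ := hs_odd
  refine isKARS_two_singleton (fun x hx => ?_)
    ⟨(⟨r - 1, by omega⟩, ⟨m, by omega⟩), ?_, (⟨r - 1, by omega⟩, ⟨m + 1, by omega⟩), ?_, ?_⟩
  · have := x.1.isLt; have := x.2.isLt
    have hx' : x.1.val ≠ 0 ∨ x.2.val ≠ 0 := by
      rw [Ne, Prod.ext_iff, Fin.ext_iff, Fin.ext_iff, hz₁, hz₂, not_and_or] at hx; exact hx
    obtain ⟨d, hd⟩ : ∃ d, d = x.1.val + min x.2.val (2 * m + 1 - x.2.val) := ⟨_, rfl⟩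
    obtain ⟨γ, hγ⟩ : ∃ γ, γ = min d m := ⟨_, rfl⟩
    -- a vertex of level `d` off the mirror axis, and its mirror image
    refine ⟨(⟨d - γ, by omega⟩, ⟨γ, by omega⟩), (⟨d - γ, by omega⟩, ⟨2 * m + 1 - γ, by omega⟩),
      ?_, ?_, ?_⟩ <;>
      simp only [mem_cls_singleton_pathGraph_boxProd_cycleGraph, hz₁, hz₂, Nat.dist, Ne,
        Prod.ext_iff, Fin.ext_iff] <;> omega
  · simp only [Ne, Prod.ext_iff, Fin.ext_iff, hz₁, hz₂]; omega
  · simp only [Ne, Prod.ext_iff, Fin.ext_iff]; omega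
  · ext y
    have := y.1.isLt; have := y.2.isLt
    simp only [mem_cls_singleton_pathGraph_boxProd_cycleGraph, hz₁, hz₂, Nat.dist,
      Set.mem_insert_iff, Set.mem_singleton_iff, Prod.ext_iff, Fin.ext_iff]
    omega

theorem isKARS_pathGraph_boxProd_cycleGraph_of_even {r s : ℕ} (hr : 2 ≤ r) (hs : 3 ≤ s)
    (hr_odd : Odd r) (hs_even : Even s) {z : Fin r × Fin s} (hz₁ : z.1.val = (r - 1) / 2)
    (hz₂ : z.2.val = 0) :
    IsKARS (pathGraph r □ cycleGraph s) 2 {z} := by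
  obtain ⟨p, rfl⟩ := hr_odd
  obtain ⟨m, rfl⟩ := hs_even
  replace hz₁ : z.1.val = p := by omega
  refine isKARS_two_singleton (fun x hx => ?_)
    ⟨(⟨0, by omega⟩, ⟨m, by omega⟩), ?_, (⟨2 * p, by omega⟩, ⟨m, by omega⟩), ?_, ?_⟩
  · have := x.1.isLt; have := x.2.isLt
    have hx' : x.1.val ≠ p ∨ x.2.val ≠ 0 := by
      rw [Ne, Prod.ext_iff, Fin.ext_iff, Fin.ext_iff, hz₁, hz₂, not_and_or] at hx; exact hx
    obtain ⟨d, hd⟩ : ∃ d, d = x.1.val - p + (p - x.1.val) + min x.2.val (m + m - x.2.val) :=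
      ⟨_, rfl⟩
    rcases lt_or_ge d (p + m) with hlt | hge
    · obtain ⟨γ, hγ⟩ : ∃ γ, γ = min d (m - 1) := ⟨_, rfl⟩
      -- a vertex of level `d` off the mirror axis, and its mirror image
      refine ⟨(⟨p + (d - γ), by omega⟩, ⟨γ, by omega⟩),
        (⟨p + (d - γ), by omega⟩, ⟨m + m - γ, by omega⟩), ?_, ?_, ?_⟩ <;>
        simp only [mem_cls_singleton_pathGraph_boxProd_cycleGraph, hz₁, hz₂, Nat.dist, Ne,
          Prod.ext_iff, Fin.ext_iff] <;> omega
    · refine ⟨(⟨0, by omega⟩, ⟨m, by omega⟩), (⟨2 * p, by omega⟩, ⟨m, by omega⟩), ?_, ?_, ?_⟩ <;>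
        simp only [mem_cls_singleton_pathGraph_boxProd_cycleGraph, hz₁, hz₂, Nat.dist, Ne,
          Prod.ext_iff, Fin.ext_iff] <;> omega
  · simp only [Ne, Prod.ext_iff, Fin.ext_iff, hz₁, hz₂]; omega
  · simp only [Ne, Prod.ext_iff, Fin.ext_iff]; omega
  · ext y
    have := y.1.isLt; have := y.2.isLt
    simp only [mem_cls_singleton_pathGraph_boxProd_cycleGraph, hz₁, hz₂, Nat.dist,
      Set.mem_insert_iff, Set.mem_singleton_iff, Prod.ext_iff, Fin.ext_iff]
    omega

/-- For `r ≥ 2`, `s ≥ 3` with `r, s` not both even, `adim_2(P_r □ C_s) = 1`: when `s`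
is odd the vertex `(u_1, v_0)` is a 2-ARS, and when `s` is even (so `r` is odd) the
vertex `(u_{(r+1)/2}, v_0)` is a 2-ARS. -/
theorem stmt14 (r s : ℕ) (hr : 2 ≤ r) (hs : 3 ≤ s) (h : ¬(Even r ∧ Even s)) :
    adim ((pathGraph r).boxProd (cycleGraph s)) 2 = 1 ∧
    (Odd s → IsKARS ((pathGraph r).boxProd (cycleGraph s)) 2
      ({(⟨0, by omega⟩, ⟨0, by omega⟩)} : Set (Fin r × Fin s))) ∧
    (Even s → IsKARS ((pathGraph r).boxProd (cycleGraph s)) 2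
      ({(⟨(r - 1) / 2, by omega⟩, ⟨0, by omega⟩)} : Set (Fin r × Fin s))) := by
  have hodd (hs' : Odd s) := isKARS_pathGraph_boxProd_cycleGraph_of_odd hr hs hs'
    (z := (⟨0, by omega⟩, ⟨0, by omega⟩)) rfl rfl
  have heven (hs' : Even s) := isKARS_pathGraph_boxProd_cycleGraph_of_even hr hs
    (Nat.not_even_iff_odd.1 fun hr' => h ⟨hr', hs'⟩) hs'
    (z := (⟨(r - 1) / 2, by omega⟩, ⟨0, by omega⟩)) rfl rfl
  refine ⟨?_, hodd, heven⟩
  obtain hs' | hs' := Nat.even_or_odd s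
  exacts [adim_eq_one_of_isKARS_singleton (heven hs'), adim_eq_one_of_isKARS_singleton (hodd hs')]
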